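/- (Gradient with respect to the parameters decomposes as a sum over time steps.) Fix d, m, N ∈ ℕ, a sequence x = (x_0, …, x_N) in ℝ^d with increments Δx_i := x_i − x_{i−1}, and parameters θ ∈ (Matrix (Fin m) (Fin m) ℝ)^d. For 1 ≤ n ≤ N define F_n : (Matrix (Fin m) (Fin m) ℝ)^d → Matrix (Fin m) (Fin m) ℝ by F_n(ϑ) := z_{n−1}(θ) * exp(M_ϑ(Δx_n)) * exp(M_θ(Δx_{n+1})) * ⋯ * exp(M_θ(Δx_N)) (only the n-th step uses the variable parameter ϑ). Let ψ : Matrix (Fin m) (Fin m) ℝ → ℝ be differentiable at z_N(θ). Then for every ξ ∈ (Matrix (Fin m) (Fin m) ℝ)^d: fderiv ℝ (ψ ∘ z_N) θ (ξ) = Σ_{n=1}^N fderiv ℝ (ψ ∘ F_n) θ (ξ). -/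

import Mathlib

attribute [local instance] Matrix.linftyOpNormedAddCommGroup Matrix.linftyOpNormedRing
  Matrix.linftyOpNormedAlgebra

/-- `M_θ v = ∑ j, v j • θ j`, the trainable linear map of the development layer. -/
noncomputable def devLayerM (d m : ℕ) (θ : Fin d → Matrix (Fin m) (Fin m) ℝ)
    (v : Fin d → ℝ) : Matrix (Fin m) (Fin m) ℝ :=
  ∑ j, v j • θ j

/-- The development layer output `z_n (θ) = exp (M_θ Δx_1) * ⋯ * exp (M_θ Δx_n)`
(ordered product, `z_0 = 1`), where `Δx_i = x i - x (i-1)`. -/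
noncomputable def devLayerZ (d m : ℕ) (x : ℕ → Fin d → ℝ) (n : ℕ)
    (θ : Fin d → Matrix (Fin m) (Fin m) ℝ) : Matrix (Fin m) (Fin m) ℝ :=
  ((List.range n).map
    (fun i => NormedSpace.exp (devLayerM d m θ (x (i + 1) - x i)))).prod

/-!
`ψ ∘ z_N` is the restriction to the diagonal `ϑ_1 = ⋯ = ϑ_N` of
`Φ (ϑ_1, …, ϑ_N) := ψ (exp (M_{ϑ_1} Δx_1) ⋯ exp (M_{ϑ_N} Δx_N))`, in which every step has its own
parameter. The differential of a map along the diagonal is the sum of its partial differentials,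
and freezing every parameter except the `n`-th one at `θ` turns `Φ` into `ψ ∘ F_n`.
-/

open Function

section DiagonalDerivative

variable {𝕜 ι E G : Type*} [NontriviallyNormedField 𝕜] [Fintype ι] [DecidableEq ι]
  [NormedAddCommGroup E] [NormedSpace 𝕜 E] [NormedAddCommGroup G] [NormedSpace 𝕜 G]

theorem fderiv_comp_const_eq_sum_fderiv_comp_update {Φ : (ι → E) → G} {θ : E}
    (hΦ : DifferentiableAt 𝕜 Φ (fun _ => θ)) (ξ : E) :
    fderiv 𝕜 (fun ϑ => Φ (fun _ => ϑ)) θ ξ =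
      ∑ i, fderiv 𝕜 (fun ϑ => Φ (update (fun _ => θ) i ϑ)) θ ξ := by
  have hconst : HasFDerivAt (fun ϑ : E => fun _ : ι => ϑ)
      (ContinuousLinearMap.pi fun _ => ContinuousLinearMap.id 𝕜 E) θ :=
    hasFDerivAt_pi.2 fun _ => hasFDerivAt_id θ
  have hupdate (i : ι) : fderiv 𝕜 (fun ϑ => Φ (update (fun _ => θ) i ϑ)) θ ξ =
      fderiv 𝕜 Φ (fun _ => θ) (Pi.single i ξ) := by
    have hΦ' : DifferentiableAt 𝕜 Φ (update (fun _ => θ) i θ) := by rwa [update_eq_self]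
    have hupd := hasFDerivAt_update (𝕜 := 𝕜) (fun _ => θ) (i := i) θ
    rw [fderiv_fun_comp θ hΦ' hupd.differentiableAt, hupd.fderiv, update_eq_self]
    refine congrArg (fderiv 𝕜 Φ _) (funext fun j => ?_)
    rcases eq_or_ne j i with rfl | hji <;> simp [*]
  rw [fderiv_fun_comp θ hΦ hconst.differentiableAt, hconst.fderiv,
    Finset.sum_congr rfl fun i _ => hupdate i, ← map_sum, Finset.univ_sum_single fun _ => ξ]
  rfl

end DiagonalDerivative

theorem List.prod_map_range_ite_eq {M : Type*} [Monoid M] (f h : ℕ → M) (n r : ℕ) :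
    ((List.range (n + 1 + r)).map fun k => if k = n then h k else f k).prod =
      ((List.range n).map f).prod * h n * ((List.range r).map fun j => f (n + 1 + j)).prod := by
  have hlt : ∀ k ∈ List.range n, (if k = n then h k else f k) = f k := fun k hk =>
    if_neg (List.mem_range.1 hk).ne
  rw [List.range_add, List.range_succ]
  simp [List.map_congr_left hlt, comp_def, mul_assoc, add_assoc]

/-- `ϑ i` is the parameter of the step with increment `Δx_{i+1} = x (i + 1) - x i`. -/
noncomputable def devLayerZStepwise (d m N : ℕ) (x : ℕ → Fin d → ℝ)
    (ϑ : Fin N → Fin d → Matrix (Fin m) (Fin m) ℝ) : Matrix (Fin m) (Fin m) ℝ :=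
  ((List.finRange N).map
    (fun i => NormedSpace.exp (devLayerM d m (ϑ i) (x (i + 1) - x i)))).prod

section DevelopmentLayer

variable {d m : ℕ}

theorem differentiable_devLayerM (v : Fin d → ℝ) :
    Differentiable ℝ fun θ : Fin d → Matrix (Fin m) (Fin m) ℝ => devLayerM d m θ v := by
  unfold devLayerM
  fun_prop

theorem differentiable_exp_devLayerM (v : Fin d → ℝ) :
    Differentiable ℝ fun θ : Fin d → Matrix (Fin m) (Fin m) ℝ =>
      NormedSpace.exp (devLayerM d m θ v) := fun θ =>
  (NormedSpace.exp_analytic (𝕂 := ℝ) _).differentiableAt.comp θ (differentiable_devLayerM v θ)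

variable {N : ℕ} (x : ℕ → Fin d → ℝ)

theorem differentiable_devLayerZStepwise : Differentiable ℝ (devLayerZStepwise d m N x) := by
  intro ϑ
  have hstep (i : Fin N) : HasFDerivAt
      (fun ϑ : Fin N → Fin d → Matrix (Fin m) (Fin m) ℝ =>
        NormedSpace.exp (devLayerM d m (ϑ i) (x (i + 1) - x i)))
      (fderiv ℝ (fun ϑ : Fin N → Fin d → Matrix (Fin m) (Fin m) ℝ =>
        NormedSpace.exp (devLayerM d m (ϑ i) (x (i + 1) - x i))) ϑ) ϑ :=
    ((differentiable_exp_devLayerM _).comp (differentiable_apply i) ϑ).hasFDerivAt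
  exact (HasFDerivAt.list_prod' fun i _ => hstep i).differentiableAt

theorem devLayerZStepwise_const (θ : Fin d → Matrix (Fin m) (Fin m) ℝ) :
    devLayerZStepwise d m N x (fun _ => θ) = devLayerZ d m x N θ := by
  rw [devLayerZStepwise, devLayerZ, ← List.map_coe_finRange_eq_range, List.map_map]
  rfl

theorem devLayerZStepwise_update (θ ϑ : Fin d → Matrix (Fin m) (Fin m) ℝ) (n : Fin N) :
    devLayerZStepwise d m N x (update (fun _ => θ) n ϑ) =
      devLayerZ d m x n θ * NormedSpace.exp (devLayerM d m ϑ (x (n + 1) - x n)) *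
        ((List.range (N - (n + 1))).map fun j =>
          NormedSpace.exp (devLayerM d m θ (x (n + 1 + 1 + j) - x (n + 1 + j)))).prod := by
  set step := fun (k : ℕ) (η : Fin d → Matrix (Fin m) (Fin m) ℝ) =>
    NormedSpace.exp (devLayerM d m η (x (k + 1) - x k))
  have hrange : List.range N = List.range (n + 1 + (N - (n + 1))) := by
    congr 1
    omega
  have hupdate : ∀ i : Fin N, step i (update (fun _ => θ) n ϑ i) =
      if (i : ℕ) = n then step i ϑ else step i θ := fun i => by
    simp only [update_apply, Fin.val_inj]
    split_ifs <;> rfl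
  calc devLayerZStepwise d m N x (update (fun _ => θ) n ϑ)
      = ((List.range N).map fun k => if k = (n : ℕ) then step k ϑ else step k θ).prod := by
        rw [devLayerZStepwise, List.map_congr_left fun i _ => hupdate i,
          ← List.map_coe_finRange_eq_range, List.map_map]
        rfl
    _ = _ := by
        rw [hrange, List.prod_map_range_ite_eq]
        simp only [step, devLayerZ, add_right_comm _ 1 _]

end DevelopmentLayer

/-- The gradient of `ψ ∘ z_N` with respect to the parameters `θ` decomposes as a sum over
the time steps: `(d (ψ ∘ z_N))_θ ξ = ∑_{n=1}^N (d (ψ ∘ F_n))_θ ξ`, where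
`F_n (ϑ) = z_{n-1}(θ) * exp (M_ϑ Δx_n) * exp (M_θ Δx_{n+1}) * ⋯ * exp (M_θ Δx_N)`
uses the variable parameter `ϑ` only in the `n`-th step. -/
theorem statement15 (d m N : ℕ) (x : ℕ → Fin d → ℝ)
    (θ : Fin d → Matrix (Fin m) (Fin m) ℝ)
    (ψ : Matrix (Fin m) (Fin m) ℝ → ℝ)
    (hψ : DifferentiableAt ℝ ψ (devLayerZ d m x N θ))
    (F : ℕ → (Fin d → Matrix (Fin m) (Fin m) ℝ) → Matrix (Fin m) (Fin m) ℝ)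
    (hF : ∀ n : ℕ, 1 ≤ n → n ≤ N → ∀ ϑ : Fin d → Matrix (Fin m) (Fin m) ℝ,
      F n ϑ = devLayerZ d m x (n - 1) θ * NormedSpace.exp (devLayerM d m ϑ (x n - x (n - 1))) *
        ((List.range (N - n)).map
          (fun j => NormedSpace.exp (devLayerM d m θ (x (n + 1 + j) - x (n + j))))).prod) :
    ∀ ξ : Fin d → Matrix (Fin m) (Fin m) ℝ,
      fderiv ℝ (ψ ∘ devLayerZ d m x N) θ ξ =
        ∑ n ∈ Finset.Icc 1 N, fderiv ℝ (ψ ∘ F n) θ ξ := by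
  intro ξ
  have hΦ : DifferentiableAt ℝ (ψ ∘ devLayerZStepwise d m N x) (fun _ => θ) := by
    refine DifferentiableAt.comp _ ?_ (differentiable_devLayerZStepwise x _)
    rwa [devLayerZStepwise_const]
  have hF_update (n : Fin N) : ψ ∘ F (n + 1) =
      fun ϑ => ψ (devLayerZStepwise d m N x (update (fun _ => θ) n ϑ)) := by
    funext ϑ
    rw [comp_apply, hF (n + 1) (by omega) n.isLt ϑ, devLayerZStepwise_update,
      Nat.add_sub_cancel]
  rw [← Finset.Ico_add_one_right_eq_Icc, ← Finset.sum_Ico_add' _ 0 N 1, ← Finset.range_eq_Ico,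
    ← Fin.sum_univ_eq_sum_range]
  simp only [hF_update]
  have key := fderiv_comp_const_eq_sum_fderiv_comp_update hΦ ξ
  simp only [comp_def, devLayerZStepwise_const] at key
  exact key
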